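/- Let q ≥ 1 and let ψ(x) = ∑_{k=0}^{q−1} c_k e^{2πikx} be a trigonometric polynomial with complex coefficients and frequencies 0, 1, ..., q−1. Then sup_{x ∈ ℝ} |ψ(x)| ≤ ∑_{k=0}^{q−1} |ψ(k/q)|. -/

import Mathlib

/-!
A trigonometric polynomial `ψ` with frequencies `0, …, q-1` is recovered from its values at the
nodes `k/q` by Lagrange interpolation, `ψ(x) = ∑ₖ ψ(k/q) c_q(x - k/q)` with
`c_q(x) = q⁻¹ ∑_{j<q} e^{2πijx}`; this is orthogonality of the `q`-th roots of unity. Since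
`|c_q| ≤ 1` on `ℝ`, the triangle inequality gives the bound.
-/

open Complex Real Filter

noncomputable section

attribute [local instance] Matrix.normedAddCommGroup Matrix.normedSpace

/-- 2×2 complex matrices (holomorphic extensions of real matrix maps). -/
abbrev M2 : Type := Matrix (Fin 2) (Fin 2) ℂ

/-- The horizontal strip of half-width `ε` around the real axis. -/
def Strip (ε : ℝ) : Set ℂ := {z : ℂ | |z.im| < ε}

/-- Iterates of the cocycle: `cocycleIter α A k z = A(z+(k-1)α) ⋯ A(z)`, with value `1` for `k=0`. -/
def cocycleIter (α : ℝ) (A : ℂ → M2) : ℕ → ℂ → M2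
  | 0 => fun _ => 1
  | k + 1 => fun z => A (z + (k : ℂ) * (α : ℂ)) * cocycleIter α A k z

/-- `A ∈ C^ω_ε(ℝ/ℤ, SL(2,ℝ))`: a 1-periodic holomorphic map on the strip of half-width `ε`,
real-valued on `ℝ`, with determinant 1. -/
def IsSL2Strip (ε : ℝ) (A : ℂ → M2) : Prop :=
  DifferentiableOn ℂ A (Strip ε) ∧ (∀ z : ℂ, A (z + 1) = A z) ∧
  (∀ x : ℝ, ∀ i j, (A (x : ℝ) i j).im = 0) ∧ (∀ z ∈ Strip ε, (A z).det = 1)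

/-- `B ∈ C^ω_ε(ℝ/ℤ, PSL(2,ℝ))`: a holomorphic map on the strip of half-width `ε`,
real-valued on `ℝ`, with determinant 1, which is 1-periodic up to sign. -/
def IsPSL2Strip (ε : ℝ) (B : ℂ → M2) : Prop :=
  DifferentiableOn ℂ B (Strip ε) ∧
  (∃ s : ℂ, (s = 1 ∨ s = -1) ∧ ∀ z : ℂ, B (z + 1) = s • B z) ∧
  (∀ x : ℝ, ∀ i j, (B (x : ℝ) i j).im = 0) ∧ (∀ z ∈ Strip ε, (B z).det = 1)

/-- The rotation matrix `R_θ` (with holomorphic dependence on `θ`). -/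
def Rot (θ : ℂ) : M2 :=
  !![Complex.cos (2 * π * θ), -Complex.sin (2 * π * θ);
     Complex.sin (2 * π * θ), Complex.cos (2 * π * θ)]

open Finset

theorem IsPrimitiveRoot.sum_div_pow_pow_eq_ite {K : Type*} [Field K] {ζ : K} {q : ℕ}
    (hζ : IsPrimitiveRoot ζ q) (j m : Fin q) :
    ∑ k : Fin q, (ζ ^ (j : ℕ) / ζ ^ (m : ℕ)) ^ (k : ℕ) = if j = m then (q : K) else 0 := by
  have hζ0 : ζ ≠ 0 := hζ.ne_zero j.pos.ne'
  rw [Fin.sum_univ_eq_sum_range (fun k => (ζ ^ (j : ℕ) / ζ ^ (m : ℕ)) ^ k)]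
  split_ifs with hjm
  · simp [hjm, hζ0]
  · have hne : ζ ^ (j : ℕ) / ζ ^ (m : ℕ) ≠ 1 := fun h =>
      hjm (Fin.ext (hζ.pow_inj j.isLt m.isLt ((div_eq_one_iff_eq (pow_ne_zero _ hζ0)).1 h)))
    have hpow : (ζ ^ (j : ℕ) / ζ ^ (m : ℕ)) ^ q = 1 := by
      rw [div_pow, ← pow_mul, ← pow_mul, pow_mul', pow_mul', hζ.pow_eq_one, one_pow, one_pow,
        div_one]
    rw [geom_sum_eq hne, hpow, sub_self, zero_div]

def trigPoly {q : ℕ} (c : Fin q → ℂ) (x : ℝ) : ℂ :=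
  ∑ k : Fin q, c k * Complex.exp (2 * π * I * k * x)

def lagrangeKernel (q : ℕ) (x : ℝ) : ℂ :=
  (q : ℂ)⁻¹ * ∑ j : Fin q, Complex.exp (2 * π * I * j * x)

theorem norm_lagrangeKernel_le_one (q : ℕ) (x : ℝ) : ‖lagrangeKernel q x‖ ≤ 1 := by
  have hexp (j : Fin q) : ‖Complex.exp (2 * π * I * j * x)‖ = 1 := by
    rw [show 2 * π * I * j * x = ((2 * π * j * x : ℝ) : ℂ) * I by push_cast; ring]
    exact norm_exp_ofReal_mul_I _
  calc ‖lagrangeKernel q x‖ ≤ (q : ℝ)⁻¹ * ∑ j : Fin q, ‖Complex.exp (2 * π * I * j * x)‖ := by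
        rw [lagrangeKernel, norm_mul, norm_inv, Complex.norm_natCast]
        gcongr
        exact norm_sum_le _ _
    _ = (q : ℝ)⁻¹ * q := by simp [hexp]
    _ ≤ 1 := inv_mul_le_one_of_le₀ le_rfl q.cast_nonneg

theorem trigPoly_eq_sum_mul_lagrangeKernel {q : ℕ} (c : Fin q → ℂ) (x : ℝ) :
    trigPoly c x = ∑ k : Fin q, trigPoly c (k / q) * lagrangeKernel q (x - k / q) := by
  obtain rfl | hq := eq_or_ne q 0
  · simp [trigPoly]
  set ζ : ℂ := Complex.exp (2 * π * I / q)
  have hζ : IsPrimitiveRoot ζ q := Complex.isPrimitiveRoot_exp q hq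
  have hexp (j m k : Fin q) :
      Complex.exp (2 * π * I * j * ((k / q : ℝ) : ℂ)) *
          Complex.exp (2 * π * I * m * ((x - k / q : ℝ) : ℂ)) =
        Complex.exp (2 * π * I * m * x) * (ζ ^ (j : ℕ) / ζ ^ (m : ℕ)) ^ (k : ℕ) := by
    simp only [ζ, ← Complex.exp_nat_mul, ← Complex.exp_sub, ← Complex.exp_add]
    congr 1
    push_cast
    field_simp
    ring
  calc trigPoly c x
      = ∑ m : Fin q, ∑ j : Fin q, c j * Complex.exp (2 * π * I * m * x) *
          ((q : ℂ)⁻¹ * ∑ k : Fin q, (ζ ^ (j : ℕ) / ζ ^ (m : ℕ)) ^ (k : ℕ)) := by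
        simp [hζ.sum_div_pow_pow_eq_ite, trigPoly, hq]
    _ = ∑ m : Fin q, ∑ j : Fin q, ∑ k : Fin q,
          c j * Complex.exp (2 * π * I * j * ((k / q : ℝ) : ℂ)) *
            ((q : ℂ)⁻¹ * Complex.exp (2 * π * I * m * ((x - k / q : ℝ) : ℂ))) := by
        simp only [mul_sum]
        refine sum_congr rfl fun m _ => sum_congr rfl fun j _ => sum_congr rfl fun k _ => ?_
        linear_combination (-(c j * (q : ℂ)⁻¹)) * hexp j m k
    _ = ∑ m : Fin q, ∑ k : Fin q, ∑ j : Fin q,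
          c j * Complex.exp (2 * π * I * j * ((k / q : ℝ) : ℂ)) *
            ((q : ℂ)⁻¹ * Complex.exp (2 * π * I * m * ((x - k / q : ℝ) : ℂ))) :=
        sum_congr rfl fun _ _ => sum_comm
    _ = _ := by
        rw [sum_comm]
        simp only [trigPoly, lagrangeKernel, mul_sum, sum_mul]

theorem lagrange_interpolation_bound_general (q : ℕ) (c : Fin q → ℂ) (x : ℝ) :
    ‖∑ k : Fin q, c k * Complex.exp (2 * π * I * (k : ℂ) * (x : ℂ))‖ ≤
      ∑ k : Fin q, ‖∑ j : Fin q,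
        c j * Complex.exp (2 * π * I * (j : ℂ) * (((k : ℝ) / (q : ℝ) : ℝ) : ℂ))‖ := by
  calc ‖trigPoly c x‖
      = ‖∑ k : Fin q, trigPoly c (k / q) * lagrangeKernel q (x - k / q)‖ := by
        rw [trigPoly_eq_sum_mul_lagrangeKernel]
    _ ≤ ∑ k : Fin q, ‖trigPoly c (k / q)‖ * ‖lagrangeKernel q (x - k / q)‖ :=
        norm_sum_le_of_le _ fun _ _ => (norm_mul _ _).le
    _ ≤ ∑ k : Fin q, ‖trigPoly c (k / q)‖ :=
        sum_le_sum fun _ _ =>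
          mul_le_of_le_one_right (norm_nonneg _) (norm_lagrangeKernel_le_one _ _)

/-- **Lagrange trigonometric interpolation bound.** If `ψ(x) = ∑_{k=0}^{q−1} c_k e^{2πikx}`
is a trigonometric polynomial with frequencies `0, …, q−1`, then
`sup_x |ψ(x)| ≤ ∑_{k=0}^{q−1} |ψ(k/q)|`. -/
theorem lagrange_interpolation_bound (q : ℕ) (hq : 1 ≤ q) (c : Fin q → ℂ) (x : ℝ) :
    ‖∑ k : Fin q, c k * Complex.exp (2 * π * I * (k : ℂ) * (x : ℂ))‖ ≤
      ∑ k : Fin q, ‖∑ j : Fin q,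
        c j * Complex.exp (2 * π * I * (j : ℂ) * (((k : ℝ) / (q : ℝ) : ℝ) : ℂ))‖ :=
  lagrange_interpolation_bound_general q c x
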